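/- Fix relatively prime positive integers p and q and ρ > 0, and let m : ℕ → ℕ be a sequence with (m(n) − (p/q)·n)/√n → ρ as n → ∞. Then there exists C > 0 such that for all sufficiently large n, on the torus T = (ZMod n) × (ZMod m(n)), the probability that N_{(p,q)}(ω) > C·n^{1/2} is at most exp(−C^{−1}·n^{1/2}). -/

import Mathlib

open Function Filter

/-- The discrete torus `Z_n × Z_m`. -/
abbrev Torus (n m : ℕ) := ZMod n × ZMod m

/-- The quenched random walk determined by a configuration `ω`:
`φ_ω(x,y) = (x+1,y)` if `ω(x,y) = true` and `(x,y+1)` otherwise. -/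
def step {n m : ℕ} (ω : Torus n m → Bool) (z : Torus n m) : Torus n m :=
  if ω z then (z.1 + 1, z.2) else (z.1, z.2 + 1)

/-- The set of cycles of `step ω`: the orbits of its periodic points. -/
def cycles {n m : ℕ} (ω : Torus n m → Bool) : Set (Set (Torus n m)) :=
  {C | ∃ z ∈ periodicPts (step ω), C = {w | ∃ i : ℕ, (step ω)^[i] z = w}}

/-- `N(ω)`: the total number of distinct cycles of `step ω`. -/
noncomputable def numCycles {n m : ℕ} (ω : Torus n m → Bool) : ℕ :=
  (cycles ω).ncard

/-- A cycle `C` has homology class `(p, q)`: it contains `n·p` points where `ω` is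
`true` (horizontal steps) and `m·q` points where `ω` is `false` (vertical steps). -/
def HasHomology {n m : ℕ} (ω : Torus n m → Bool) (C : Set (Torus n m)) (p q : ℕ) : Prop :=
  {z ∈ C | ω z = true}.ncard = n * p ∧ {z ∈ C | ω z = false}.ncard = m * q

/-- `N_{(p,q)}(ω)`: the number of distinct cycles of `step ω` of homology class `(p, q)`. -/
noncomputable def numCyclesPQ {n m : ℕ} (ω : Torus n m → Bool) (p q : ℕ) : ℕ :=
  {C ∈ cycles ω | HasHomology ω C p q}.ncard

/-- The probability of an event under the uniform (CRSF) measure on the `2^{nm}`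
configurations. -/
noncomputable def prob {n m : ℕ} (A : (Torus n m → Bool) → Prop) : ℝ :=
  ({ω | A ω} : Set (Torus n m → Bool)).ncard / 2 ^ (n * m)

/-- The expectation of a functional under the uniform (CRSF) measure on configurations. -/
noncomputable def expect {n m : ℕ} (f : (Torus n m → Bool) → ℝ) : ℝ :=
  (∑ᶠ ω, f ω) / 2 ^ (n * m)

/-!
A cycle of class `(p, q)` makes `n p` horizontal and `m q` vertical steps, so it has
`L = n p + m q` points, and since `p > 0` it passes through the column `x = 0`. Started there it
is the walk coded by its height and its set of `n p` horizontal step times, so there are at most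
`M = m · C(L, n p)` candidates. Distinct cycles are disjoint and a fixed family of `k` disjoint
candidates is realized with probability `2^{-kL}`, whence
`P(N_{(p,q)} ≥ k) ≤ C(M, k) 2^{-kL} ≤ (e M / (k 2^L))^k`. As `C(L, t) ≤ 2^L / √L` and
`m ≤ B n`, the base is at most `e B √n / k ≤ e⁻¹` once `k ≥ e² B √n`.
-/

open Finset

section Orbit

variable {α : Type*} {f : α → α} {z : α}

theorem setOf_iterate_eq_image_Iio (hz : z ∈ periodicPts f) :
    {w | ∃ i, f^[i] z = w} = (f^[·] z) '' Set.Iio (minimalPeriod f z) := by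
  ext w
  constructor
  · rintro ⟨i, rfl⟩
    exact ⟨i % minimalPeriod f z, Nat.mod_lt _ (minimalPeriod_pos_of_mem_periodicPts hz),
      iterate_mod_minimalPeriod_eq⟩
  · rintro ⟨i, -, rfl⟩
    exact ⟨i, rfl⟩

theorem setOf_iterate_apply_iterate_eq (hz : z ∈ periodicPts f) (j : ℕ) :
    {w | ∃ i, f^[i] (f^[j] z) = w} = {w | ∃ i, f^[i] z = w} := by
  have hj : f^[j] z ∈ periodicPts f := by
    rw [← minimalPeriod_pos_iff_mem_periodicPts, minimalPeriod_apply_iterate hz]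
    exact minimalPeriod_pos_of_mem_periodicPts hz
  ext w
  simp only [Set.mem_ofPred_eq, ← mem_periodicOrbit_iff hz, ← mem_periodicOrbit_iff hj,
    periodicOrbit_apply_iterate_eq hz]

theorem card_filter_range_minimalPeriod (hz : z ∈ periodicPts f) (P : α → Prop)
    [DecidablePred P] :
    #{i ∈ range (minimalPeriod f z) | P (f^[i] z)} =
      {w | (∃ i, f^[i] z = w) ∧ P w}.ncard := by
  have himage : {w | (∃ i, f^[i] z = w) ∧ P w}
      = (f^[·] z) '' ↑(filter (fun i => P (f^[i] z)) (range (minimalPeriod f z))) := by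
    ext w
    constructor
    · rintro ⟨hw, hP⟩
      obtain ⟨i, hi, rfl⟩ : w ∈ (f^[·] z) '' Set.Iio (minimalPeriod f z) :=
        setOf_iterate_eq_image_Iio hz ▸ hw
      exact ⟨i, by simpa [hP] using hi, rfl⟩
    · rintro ⟨i, hi, rfl⟩
      exact ⟨⟨i, rfl⟩, (mem_filter.1 hi).2⟩
  rw [himage, Set.InjOn.ncard_image, Set.ncard_coe_finset]
  exact iterate_injOn_Iio_minimalPeriod.mono fun i hi => by simpa using (mem_filter.1 hi).1

end Orbit

theorem exists_card_filter_range_eq (P : ℕ → Prop) [DecidablePred P] {t d : ℕ}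
    (ht : t ≤ #{i ∈ range d | P i}) : ∃ j ≤ d, #{i ∈ range j | P i} = t := by
  induction d with
  | zero => exact ⟨0, le_rfl, by simp at ht ⊢; omega⟩
  | succ d ih =>
    by_cases htd : t ≤ #{i ∈ range d | P i}
    · obtain ⟨j, hj, hjt⟩ := ih htd
      exact ⟨j, hj.trans d.le_succ, hjt⟩
    · have hsucc : #{i ∈ range (d + 1) | P i} ≤ #{i ∈ range d | P i} + 1 := by
        rw [range_add_one, filter_insert]
        split_ifs
        exacts [card_insert_le _ _, Nat.le_succ _]
      exact ⟨d + 1, le_rfl, by omega⟩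

-- `3 h + 1` in place of the sharp `π h` turns the induction step into a polynomial inequality.
theorem centralBinom_sq_mul_le (h : ℕ) : h.centralBinom ^ 2 * (3 * h + 1) ≤ 16 ^ h := by
  induction h with
  | zero => simp
  | succ h ih =>
    have hrec := Nat.succ_mul_centralBinom_succ h
    have hpoly : (2 * h + 1) ^ 2 * (3 * h + 4) ≤ 4 * (h + 1) ^ 2 * (3 * h + 1) := by
      ring_nf; omega
    refine Nat.le_of_mul_le_mul_right (c := (h + 1) ^ 2) ?_ (by positivity)
    calc (h + 1).centralBinom ^ 2 * (3 * (h + 1) + 1) * (h + 1) ^ 2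
        = 4 * h.centralBinom ^ 2 * ((2 * h + 1) ^ 2 * (3 * h + 4)) := by
          rw [show (h + 1).centralBinom ^ 2 * (3 * (h + 1) + 1) * (h + 1) ^ 2
            = ((h + 1) * (h + 1).centralBinom) ^ 2 * (3 * h + 4) by ring, hrec]
          ring
      _ ≤ 4 * h.centralBinom ^ 2 * (4 * (h + 1) ^ 2 * (3 * h + 1)) := by gcongr
      _ = 16 * (h.centralBinom ^ 2 * (3 * h + 1)) * (h + 1) ^ 2 := by ring
      _ ≤ 16 * 16 ^ h * (h + 1) ^ 2 := by gcongr
      _ = 16 ^ (h + 1) * (h + 1) ^ 2 := by ring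

theorem choose_sq_mul_le_four_pow (L t : ℕ) : L.choose t ^ 2 * L ≤ 4 ^ L := by
  obtain ⟨h, rfl | rfl⟩ := Nat.even_or_odd' L
  · calc (2 * h).choose t ^ 2 * (2 * h) ≤ h.centralBinom ^ 2 * (3 * h + 1) := by
          gcongr
          · exact Nat.choose_le_centralBinom t h
          · omega
      _ ≤ 16 ^ h := centralBinom_sq_mul_le h
      _ = 4 ^ (2 * h) := by rw [pow_mul]; norm_num
  · have hmiddle : 2 * (2 * h + 1).choose h = (h + 1).centralBinom := by
      rw [Nat.centralBinom_eq_two_mul_choose, show 2 * (h + 1) = 2 * h + 1 + 1 by ring,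
        Nat.choose_succ_succ, Nat.choose_symm_half]
      ring
    have hle : (2 * h + 1).choose t ≤ (2 * h + 1).choose h := by
      simpa [show (2 * h + 1) / 2 = h by omega] using Nat.choose_le_middle t (2 * h + 1)
    refine Nat.le_of_mul_le_mul_left ?_ (by norm_num : 0 < 4)
    calc 4 * ((2 * h + 1).choose t ^ 2 * (2 * h + 1))
        ≤ 4 * ((2 * h + 1).choose h ^ 2 * (3 * (h + 1) + 1)) := by gcongr <;> omega
      _ = (2 * (2 * h + 1).choose h) ^ 2 * (3 * (h + 1) + 1) := by ring
      _ ≤ 16 ^ (h + 1) := hmiddle ▸ centralBinom_sq_mul_le (h + 1)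
      _ = 4 * 4 ^ (2 * h + 1) := by rw [pow_succ, pow_succ, pow_mul]; norm_num; ring

theorem choose_mul_sqrt_le_two_pow (L t : ℕ) : (L.choose t : ℝ) * √L ≤ 2 ^ L := by
  rw [← Real.sqrt_sq (by positivity : (0 : ℝ) ≤ L.choose t), ← Real.sqrt_mul (by positivity),
    ← Real.sqrt_sq (by positivity : (0 : ℝ) ≤ 2 ^ L)]
  refine Real.sqrt_le_sqrt ?_
  rw [← pow_mul, mul_comm L, pow_mul]
  exact_mod_cast choose_sq_mul_le_four_pow L t

theorem mul_choose_le_mul_sqrt_mul_two_pow {n m L t : ℕ} {B : ℝ} (hn : 0 < n) (hnL : n ≤ L)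
    (hm : (m : ℝ) ≤ B * n) : (m * L.choose t : ℝ) ≤ B * √n * 2 ^ L := by
  have hsqrt : 0 < √(n : ℝ) := Real.sqrt_pos.2 (by exact_mod_cast hn)
  refine le_of_mul_le_mul_right ?_ hsqrt
  have hBn : 0 ≤ B * n := m.cast_nonneg.trans hm
  calc (m * L.choose t : ℝ) * √n ≤ B * n * (L.choose t * √L) := by
        rw [mul_assoc]
        gcongr
    _ ≤ B * n * 2 ^ L := by gcongr; exact choose_mul_sqrt_le_two_pow L t
    _ = B * √n * 2 ^ L * √n := by
        linear_combination (-(B * 2 ^ L)) * Real.mul_self_sqrt (Nat.cast_nonneg (α := ℝ) n)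

section Counting

variable {α ι : Type*} [Fintype α] [DecidableEq α]

theorem card_mul_two_pow_card_le_of_eqOn (F : Finset (α → Bool)) (D : Finset α)
    (hF : ∀ ω ∈ F, ∀ ω' ∈ F, ∀ a ∈ D, ω a = ω' a) :
    #F * 2 ^ #D ≤ 2 ^ Fintype.card α := by
  have hrestrict : #F ≤ 2 ^ (Fintype.card α - #D) := by
    calc #F ≤ #(univ : Finset ({a // a ∉ D} → Bool)) := by
          refine card_le_card_of_injOn (fun ω a => ω a) (fun _ _ => mem_univ _) ?_
          intro ω hω ω' hω' h
          funext a
          by_cases ha : a ∈ D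
          · exact hF ω hω ω' hω' a ha
          · exact congrFun h ⟨a, ha⟩
      _ = 2 ^ (Fintype.card α - #D) := by
          rw [card_univ, Fintype.card_fun, Fintype.card_bool, Fintype.card_subtype_compl,
            Fintype.card_coe]
  calc #F * 2 ^ #D ≤ 2 ^ (Fintype.card α - #D) * 2 ^ #D := by gcongr
    _ = 2 ^ Fintype.card α := by rw [← pow_add, Nat.sub_add_cancel (card_le_univ D)]

theorem card_mul_two_pow_le_choose_mul_two_pow [DecidableEq ι] {P : Finset ι}
    {supp : ι → Finset α} {realizes : (α → Bool) → ι → Prop}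
    (hdet : ∀ ω ω' i, realizes ω i → realizes ω' i → ∀ a ∈ supp i, ω a = ω' a)
    {bad : Finset (α → Bool)} {k L : ℕ}
    (hbad : ∀ ω ∈ bad, ∃ S ⊆ P, #S = k ∧ (S : Set ι).PairwiseDisjoint supp ∧
      ∀ i ∈ S, realizes ω i ∧ #(supp i) = L) :
    #bad * 2 ^ (k * L) ≤ (#P).choose k * 2 ^ Fintype.card α := by
  choose! S hSP hSk hSdisj hSreal using hbad
  have hmaps : Set.MapsTo S bad (P.powersetCard k) := fun ω hω =>
    mem_powersetCard.2 ⟨hSP ω hω, hSk ω hω⟩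
  -- the configurations choosing the same family `T` all agree on its `k * L` points
  have hfiber : ∀ T ∈ P.powersetCard k,
      #{ω ∈ bad | S ω = T} * 2 ^ (k * L) ≤ 2 ^ Fintype.card α := by
    intro T _
    obtain hempty | ⟨ω₀, hω₀⟩ := ({ω ∈ bad | S ω = T} : Finset _).eq_empty_or_nonempty
    · simp [hempty]
    obtain ⟨hω₀bad, rfl⟩ := mem_filter.1 hω₀
    have hD : #((S ω₀).biUnion supp) = k * L := by
      rw [card_biUnion (hSdisj ω₀ hω₀bad),
        sum_const_nat fun i hi => (hSreal ω₀ hω₀bad i hi).2, hSk ω₀ hω₀bad]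
    rw [← hD]
    refine card_mul_two_pow_card_le_of_eqOn _ _ fun ω hω ω' hω' a ha => ?_
    obtain ⟨hωbad, hωS⟩ := mem_filter.1 hω
    obtain ⟨hω'bad, hω'S⟩ := mem_filter.1 hω'
    obtain ⟨i, hi, hai⟩ := mem_biUnion.1 ha
    exact hdet ω ω' i (hSreal ω hωbad i (hωS ▸ hi)).1 (hSreal ω' hω'bad i (hω'S ▸ hi)).1 a
      hai
  calc #bad * 2 ^ (k * L)
        = ∑ T ∈ P.powersetCard k, #{ω ∈ bad | S ω = T} * 2 ^ (k * L) := by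
        rw [card_eq_sum_card_fiberwise hmaps, sum_mul]
    _ ≤ ∑ T ∈ P.powersetCard k, 2 ^ Fintype.card α := sum_le_sum hfiber
    _ = (#P).choose k * 2 ^ Fintype.card α := by
        rw [sum_const, card_powersetCard, smul_eq_mul]

end Counting

theorem choose_div_two_pow_le_exp_neg {M L k : ℕ} (hk : 0 < k)
    (hM : M * Real.exp 2 ≤ k * 2 ^ L) : (M.choose k : ℝ) / 2 ^ (k * L) ≤ Real.exp (-k) := by
  have hkL : (0 : ℝ) < k * 2 ^ L := by positivity
  have hfact : (k : ℝ) ^ k / k.factorial ≤ Real.exp k :=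
    Real.pow_div_factorial_le_exp _ k.cast_nonneg k
  have hbase : M * Real.exp 1 / (k * 2 ^ L) ≤ Real.exp (-1) := by
    rw [div_le_iff₀ hkL, Real.exp_neg, ← div_eq_inv_mul, le_div_iff₀ (Real.exp_pos 1), mul_assoc,
      ← Real.exp_add]
    norm_num [hM]
  calc (M.choose k : ℝ) / 2 ^ (k * L) ≤ (M : ℝ) ^ k / k.factorial / (2 ^ L) ^ k := by
        rw [mul_comm k, pow_mul]
        gcongr
        exact Nat.choose_le_pow_div k M
    _ ≤ (M : ℝ) ^ k * (Real.exp k / k ^ k) / (2 ^ L) ^ k := by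
        rw [div_eq_mul_one_div _ (k.factorial : ℝ)]
        gcongr ?_ * ?_ / _
        rw [div_le_div_iff₀ (by positivity) (by positivity), one_mul]
        rwa [div_le_iff₀ (by positivity)] at hfact
    _ = (M * Real.exp 1 / (k * 2 ^ L)) ^ k := by
        rw [div_pow, mul_pow, mul_pow, ← Real.exp_nat_mul, mul_one]
        field_simp
    _ ≤ Real.exp (-1) ^ k := by gcongr
    _ = Real.exp (-k) := by rw [← Real.exp_nat_mul]; ring_nf

section Walks

variable {n m : ℕ}

def move (b : Bool) (z : Torus n m) : Torus n m :=
  if b then (z.1 + 1, z.2) else (z.1, z.2 + 1)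

-- `(y, T)` codes the cycle through `(0, y)` whose horizontal steps occur at the times in `T`.
def walk (y : ZMod m) (T : Finset ℕ) : ℕ → Torus n m
  | 0 => (0, y)
  | i + 1 => move (decide (i ∈ T)) (walk y T i)

def walkTrace (L : ℕ) (c : ZMod m × Finset ℕ) : Finset (Torus n m) :=
  (range L).image (walk c.1 c.2)

def FollowsWalk (ω : Torus n m → Bool) (L : ℕ) (c : ZMod m × Finset ℕ) : Prop :=
  ∀ i < L, ω (walk c.1 c.2 i) = decide (i ∈ c.2)

def walkCodes (m L t : ℕ) [NeZero m] : Finset (ZMod m × Finset ℕ) :=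
  univ ×ˢ (range L).powersetCard t

theorem card_walkCodes [NeZero m] (L t : ℕ) : #(walkCodes m L t) = m * L.choose t := by
  rw [walkCodes, card_product, card_univ, ZMod.card, card_powersetCard, card_range]

theorem FollowsWalk.eq_of_mem_walkTrace {ω ω' : Torus n m → Bool} {L : ℕ}
    {c : ZMod m × Finset ℕ} (h : FollowsWalk ω L c) (h' : FollowsWalk ω' L c) {a : Torus n m}
    (ha : a ∈ walkTrace L c) : ω a = ω' a := by
  obtain ⟨i, hi, rfl⟩ := mem_image.1 ha
  rw [h i (mem_range.1 hi), h' i (mem_range.1 hi)]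

variable (ω : Torus n m → Bool)

theorem iterate_step_fst (z : Torus n m) (i : ℕ) :
    ((step ω)^[i] z).1 = z.1 + #{j ∈ range i | ω ((step ω)^[j] z) = true} := by
  induction i with
  | zero => simp
  | succ i ih =>
    rw [iterate_succ_apply', range_add_one, filter_insert]
    by_cases hi : ω ((step ω)^[i] z) = true
    · rw [if_pos hi, card_insert_of_notMem (by simp), step, if_pos hi, ih]
      push_cast
      ring
    · rw [if_neg hi, step, if_neg hi, ih]

theorem walk_eq_iterate_step {z : Torus n m} (hz : z.1 = 0) (L : ℕ) :
    ∀ i ≤ L, walk z.2 {j ∈ range L | ω ((step ω)^[j] z) = true} i = (step ω)^[i] z := by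
  intro i
  induction i with
  | zero => exact fun _ => Prod.ext hz.symm rfl
  | succ i ih =>
    intro hi
    rw [walk, ih (by omega), iterate_succ_apply']
    simp [step, move, show i < L by omega]

variable {ω} {p q : ℕ}

theorem minimalPeriod_eq_of_hasHomology {z : Torus n m} (hz : z ∈ periodicPts (step ω))
    (hH : HasHomology ω {w | ∃ i, (step ω)^[i] z = w} p q) :
    minimalPeriod (step ω) z = n * p + m * q ∧
      #{i ∈ range (n * p + m * q) | ω ((step ω)^[i] z) = true} = n * p := by
  have htrue := (card_filter_range_minimalPeriod hz (ω · = true)).trans hH.1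
  have hfalse := (card_filter_range_minimalPeriod hz (ω · = false)).trans hH.2
  have hsplit := card_filter_add_card_filter_not (s := range (minimalPeriod (step ω) z))
    (fun i => ω ((step ω)^[i] z) = true)
  simp only [Bool.not_eq_true, card_range] at hsplit
  have hd : minimalPeriod (step ω) z = n * p + m * q := by omega
  exact ⟨hd, hd ▸ htrue⟩

theorem exists_iterate_step_fst_eq_zero [NeZero n] (hp : 0 < p) {z : Torus n m}
    (hz : z ∈ periodicPts (step ω)) (hH : HasHomology ω {w | ∃ i, (step ω)^[i] z = w} p q) :
    ∃ j, ((step ω)^[j] z).1 = 0 := by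
  obtain ⟨-, hcount⟩ := minimalPeriod_eq_of_hasHomology hz hH
  have hle : n - z.1.val ≤ #{i ∈ range (n * p + m * q) | ω ((step ω)^[i] z) = true} :=
    by rw [hcount]; exact (Nat.sub_le _ _).trans (Nat.le_mul_of_pos_right n hp)
  obtain ⟨j, -, hj⟩ := exists_card_filter_range_eq _ hle
  refine ⟨j, ?_⟩
  rw [iterate_step_fst, hj, Nat.cast_sub (ZMod.val_le _), ZMod.natCast_self,
    ZMod.natCast_zmod_val]
  ring

theorem exists_walkCode_of_mem_cycles [NeZero n] [NeZero m] (hp : 0 < p) {C : Set (Torus n m)}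
    (hC : C ∈ cycles ω) (hH : HasHomology ω C p q) :
    ∃ c ∈ walkCodes m (n * p + m * q) (n * p), FollowsWalk ω (n * p + m * q) c ∧
      (walkTrace (n := n) (n * p + m * q) c : Set (Torus n m)) = C ∧
      #(walkTrace (n := n) (n * p + m * q) c) = n * p + m * q := by
  obtain ⟨z₀, hz₀, rfl⟩ := hC
  obtain ⟨j, hj⟩ := exists_iterate_step_fst_eq_zero hp hz₀ hH
  set z := (step ω)^[j] z₀
  have hz : z ∈ periodicPts (step ω) := by
    rw [← minimalPeriod_pos_iff_mem_periodicPts, minimalPeriod_apply_iterate hz₀]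
    exact minimalPeriod_pos_of_mem_periodicPts hz₀
  rw [← setOf_iterate_apply_iterate_eq hz₀ j] at hH ⊢
  obtain ⟨hd, hcount⟩ := minimalPeriod_eq_of_hasHomology hz hH
  set L := n * p + m * q
  have hwalk := walk_eq_iterate_step ω hj L
  have htrace : walkTrace L (z.2, {i ∈ range L | ω ((step ω)^[i] z) = true})
      = (range L).image ((step ω)^[·] z) :=
    image_congr fun i hi => hwalk i (mem_range.1 hi).le
  refine ⟨(z.2, {i ∈ range L | ω ((step ω)^[i] z) = true}),
    mem_product.2 ⟨mem_univ _, mem_powersetCard.2 ⟨filter_subset _ _, hcount⟩⟩,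
    fun i hi => ?_, ?_, ?_⟩
  · rw [hwalk i hi.le]
    simp [hi]
  · rw [htrace, coe_image, coe_range, ← hd, setOf_iterate_eq_image_Iio hz]
  · rw [htrace, card_image_of_injOn, card_range]
    rw [coe_range, ← hd]
    exact iterate_injOn_Iio_minimalPeriod

end Walks

section Probability

variable {n m p q : ℕ}

theorem disjoint_of_mem_cycles {ω : Torus n m → Bool} {C C' : Set (Torus n m)}
    (hC : C ∈ cycles ω) (hC' : C' ∈ cycles ω) (hne : C ≠ C') : Disjoint C C' := by
  obtain ⟨z, hz, rfl⟩ := hC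
  obtain ⟨z', hz', rfl⟩ := hC'
  rw [Set.disjoint_left]
  rintro _ ⟨i, rfl⟩ ⟨j, hj⟩
  exact hne (by
    rw [← setOf_iterate_apply_iterate_eq hz i, ← setOf_iterate_apply_iterate_eq hz' j, hj])

theorem exists_disjoint_walkCodes [NeZero n] [NeZero m] (hp : 0 < p) {ω : Torus n m → Bool}
    {k : ℕ} (hk : k ≤ numCyclesPQ ω p q) :
    ∃ S ⊆ walkCodes m (n * p + m * q) (n * p), #S = k ∧
      (S : Set (ZMod m × Finset ℕ)).PairwiseDisjoint (walkTrace (n := n) (n * p + m * q)) ∧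
      ∀ c ∈ S, FollowsWalk ω (n * p + m * q) c ∧
        #(walkTrace (n := n) (n * p + m * q) c) = n * p + m * q := by
  obtain ⟨𝒯, h𝒯, h𝒯k⟩ := Set.exists_subset_card_eq hk
  choose! enc hencCodes hencFollows hencTrace hencCard using
    fun C (hC : C ∈ {C ∈ cycles ω | HasHomology ω C p q}) =>
      exists_walkCode_of_mem_cycles hp hC.1 hC.2
  have hfin : 𝒯.Finite := Set.toFinite _
  have hinj : Set.InjOn enc 𝒯 := fun C hC C' hC' h => by
    rw [← hencTrace C (h𝒯 hC), ← hencTrace C' (h𝒯 hC'), h]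
  refine ⟨hfin.toFinset.image enc, ?_, ?_, ?_, ?_⟩
  · simpa [image_subset_iff] using fun C hC => hencCodes C (h𝒯 hC)
  · rw [card_image_of_injOn (by simpa using hinj), ← Set.ncard_eq_toFinset_card _ hfin, h𝒯k]
  · simp only [coe_image, Set.Finite.coe_toFinset]
    rintro _ ⟨C, hC, rfl⟩ _ ⟨C', hC', rfl⟩ hne
    rw [Function.onFun, ← disjoint_coe, hencTrace C (h𝒯 hC), hencTrace C' (h𝒯 hC')]
    exact disjoint_of_mem_cycles (h𝒯 hC).1 (h𝒯 hC').1 fun h => hne (h ▸ rfl)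
  · simp only [mem_image, Set.Finite.mem_toFinset]
    rintro _ ⟨C, hC, rfl⟩
    exact ⟨hencFollows C (h𝒯 hC), hencCard C (h𝒯 hC)⟩

theorem prob_mono [NeZero n] [NeZero m] {A B : (Torus n m → Bool) → Prop}
    (h : ∀ ω, A ω → B ω) : prob A ≤ prob B := by
  unfold prob
  gcongr
  exacts [Set.toFinite _, h _]

theorem prob_le_numCyclesPQ_le_choose_div_two_pow [NeZero n] [NeZero m] (hp : 0 < p) (k : ℕ) :
    prob (fun ω : Torus n m → Bool => k ≤ numCyclesPQ ω p q)
      ≤ ((m * (n * p + m * q).choose (n * p)).choose k : ℝ) / 2 ^ (k * (n * p + m * q)) := by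
  have hcount := card_mul_two_pow_le_choose_mul_two_pow
    (supp := walkTrace (n := n) (n * p + m * q)) (realizes := (FollowsWalk · (n * p + m * q)))
    (fun _ _ _ h h' _ ha => h.eq_of_mem_walkTrace h' ha) (bad := {ω | k ≤ numCyclesPQ ω p q})
    fun _ hω => exists_disjoint_walkCodes hp (mem_filter.1 hω).2
  rw [card_walkCodes, Fintype.card_prod, ZMod.card, ZMod.card] at hcount
  rw [prob, div_le_div_iff₀ (by positivity) (by positivity)]
  rw [← coe_filter_univ, Set.ncard_coe_finset]
  exact_mod_cast hcount

theorem prob_le_numCyclesPQ_le_exp_neg [NeZero n] [NeZero m] (hp : 0 < p) {B : ℝ}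
    (hmB : (m : ℝ) ≤ B * n) {k : ℕ} (hk : 0 < k) (hBk : Real.exp 2 * B * √n ≤ k) :
    prob (fun ω : Torus n m → Bool => k ≤ numCyclesPQ ω p q) ≤ Real.exp (-k) := by
  refine (prob_le_numCyclesPQ_le_choose_div_two_pow hp k).trans
    (choose_div_two_pow_le_exp_neg hk ?_)
  have hnL : n ≤ n * p + m * q :=
    (Nat.le_mul_of_pos_right n hp).trans (Nat.le_add_right _ _)
  push_cast
  calc _ ≤ B * √n * 2 ^ (n * p + m * q) * Real.exp 2 :=
        mul_le_mul_of_nonneg_right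
          (mul_choose_le_mul_sqrt_mul_two_pow (Nat.pos_of_neZero n) hnL hmB) (Real.exp_pos 2).le
    _ = Real.exp 2 * B * √n * 2 ^ (n * p + m * q) := by ring
    _ ≤ k * 2 ^ (n * p + m * q) := by gcongr

end Probability

theorem exists_eventually_pos_and_le_mul {m : ℕ → ℕ} {a ρ : ℝ} (ha : 0 ≤ a) (hρ : 0 < ρ)
    (hm : Tendsto (fun n : ℕ => ((m n : ℝ) - a * n) / √n) atTop (nhds ρ)) :
    ∃ B > 0, ∀ᶠ n : ℕ in atTop, 0 < m n ∧ (m n : ℝ) ≤ B * n := by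
  refine ⟨a + ρ + 1, by positivity, ?_⟩
  filter_upwards [hm.eventually_const_lt hρ, hm.eventually_lt_const (lt_add_one ρ),
    eventually_gt_atTop 0] with n hpos hlt hn
  have hsqrt : 0 < √(n : ℝ) := Real.sqrt_pos.2 (by exact_mod_cast hn)
  have hsqrt_le : √(n : ℝ) ≤ n := Real.sqrt_le_self_iff.2 (Or.inr (Nat.one_le_cast.2 hn))
  rw [lt_div_iff₀ hsqrt] at hpos
  rw [div_lt_iff₀ hsqrt] at hlt
  constructor
  · exact_mod_cast (by nlinarith : (0 : ℝ) < m n)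
  · nlinarith

theorem rational_spike_upper_general (p q : ℕ) (hp : 0 < p) (ρ : ℝ) (hρ : 0 < ρ) (m : ℕ → ℕ)
    (hm : Tendsto (fun n : ℕ => ((m n : ℝ) - (p : ℝ) / q * n) / Real.sqrt n)
      atTop (nhds ρ)) :
    ∃ C > 0, ∀ᶠ n : ℕ in atTop,
      prob (n := n) (m := m n)
          (fun ω => C * Real.sqrt n < (numCyclesPQ ω p q : ℝ)) ≤
        Real.exp (-C⁻¹ * Real.sqrt n) := by
  obtain ⟨B, hB, hmB⟩ := exists_eventually_pos_and_le_mul (by positivity) hρ hm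
  set C := max 1 (Real.exp 2 * B)
  have hC1 : 1 ≤ C := le_max_left _ _
  refine ⟨C, by positivity, ?_⟩
  filter_upwards [hmB, eventually_gt_atTop 0] with n ⟨hm0, hmn⟩ hn
  have : NeZero n := ⟨hn.ne'⟩
  have : NeZero (m n) := ⟨hm0.ne'⟩
  have hk : C * √n ≤ ⌈C * √n⌉₊ := Nat.le_ceil _
  calc prob (fun ω => C * √n < (numCyclesPQ ω p q : ℝ))
      ≤ prob (fun ω => ⌈C * √n⌉₊ ≤ numCyclesPQ ω p q) := prob_mono fun ω h => Nat.ceil_le.2 h.le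
    _ ≤ Real.exp (-⌈C * √n⌉₊) :=
        prob_le_numCyclesPQ_le_exp_neg hp hmn (Nat.ceil_pos.2 (by positivity))
          ((mul_le_mul_of_nonneg_right (le_max_right _ _) (Real.sqrt_nonneg _)).trans hk)
    _ ≤ Real.exp (-C⁻¹ * √n) := by
        rw [Real.exp_le_exp, neg_mul, neg_le_neg_iff]
        calc C⁻¹ * √n ≤ C * √n := by gcongr; exact (inv_le_one_of_one_le₀ hC1).trans hC1
          _ ≤ _ := hk

/-- Rational spike near `p/q`, upper bound: if `m(n) = (p/q)n + ρ√n(1+o(1))` with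
`ρ > 0`, then there is `C > 0` with `P(N_{(p,q)} > C n^{1/2}) ≤ exp(-C⁻¹ n^{1/2})`
for large `n`. -/
theorem rational_spike_upper (p q : ℕ) (hp : 0 < p) (hq : 0 < q)
    (hpq : Nat.Coprime p q) (ρ : ℝ) (hρ : 0 < ρ) (m : ℕ → ℕ)
    (hm : Tendsto (fun n : ℕ => ((m n : ℝ) - (p : ℝ) / q * n) / Real.sqrt n)
      atTop (nhds ρ)) :
    ∃ C > 0, ∀ᶠ n : ℕ in atTop,
      prob (n := n) (m := m n)
          (fun ω => C * Real.sqrt n < (numCyclesPQ ω p q : ℝ)) ≤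
        Real.exp (-C⁻¹ * Real.sqrt n) :=
  rational_spike_upper_general p q hp ρ hρ m hm
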